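/- Let Φ(t) = ∫_0^t φ(s) ds be a Young function and w a weight on ℝⁿ. If the condition A_φ holds, i.e. (ε w(Q)/|Q|) φ( (1/|Q|) ∫_Q φ^{-1}(1/(ε w(x))) dx ) ≤ C for all cubes Q and all ε > 0, then the Bloom–Kerman condition holds: (1/|Q|) ∫_Q φ^{-1}( (1/C) φ(λ) (w(Q)/|Q|) (1/w(x)) ) dx ≤ C λ for all cubes Q and λ > 0. -/
import Mathlib


open scoped ENNReal NNReal
open MeasureTheory Set

/-- Generalized (right-continuous) inverse of `φ`: `φ⁻¹(s) = inf{x ≥ 0 : s ≤ φ(x)}`. -/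
noncomputable def geninv (φ : ℝ → ℝ) (s : ℝ) : ℝ := sInf {x : ℝ | 0 ≤ x ∧ s ≤ φ x}

/-- The cube in `ℝⁿ` with lower corner `a` and side length `c`. -/
def cube {n : ℕ} (a : Fin n → ℝ) (c : ℝ) : Set (Fin n → ℝ) :=
  {x | ∀ i, a i ≤ x i ∧ x i ≤ a i + c}

lemma geninv_nonneg (φ : ℝ → ℝ) (s : ℝ) : 0 ≤ geninv φ s :=
  Real.sInf_nonneg fun _ hx => hx.1

lemma geninv_set_nonempty {φ : ℝ → ℝ} (hmono : Monotone φ)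
    (hφtop : Filter.Tendsto φ Filter.atTop Filter.atTop) (s : ℝ) :
    {x : ℝ | 0 ≤ x ∧ s ≤ φ x}.Nonempty := by
  obtain ⟨x, hx⟩ := (hφtop.eventually_ge_atTop s).exists
  exact ⟨max x 0, le_max_right _ _, hx.trans (hmono (le_max_left _ _))⟩

lemma geninv_le {φ : ℝ → ℝ} {s t : ℝ} (ht : 0 ≤ t) (h : s ≤ φ t) : geninv φ s ≤ t :=
  csInf_le ⟨0, fun _ hy => hy.1⟩ ⟨ht, h⟩

lemma le_apply_of_geninv_lt {φ : ℝ → ℝ} (hmono : Monotone φ)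
    (hφtop : Filter.Tendsto φ Filter.atTop Filter.atTop) {s y : ℝ}
    (h : geninv φ s < y) : s ≤ φ y := by
  obtain ⟨x, hxS, hxy⟩ := exists_lt_of_csInf_lt (geninv_set_nonempty hmono hφtop s) h
  exact hxS.2.trans (hmono hxy.le)

lemma geninv_mono {φ : ℝ → ℝ} (hmono : Monotone φ)
    (hφtop : Filter.Tendsto φ Filter.atTop Filter.atTop) : Monotone (geninv φ) :=
  fun _s s' h =>
  csInf_le_csInf ⟨0, fun _ hy => hy.1⟩ (geninv_set_nonempty hmono hφtop s')
    fun x hx => ⟨hx.1, h.trans hx.2⟩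

lemma geninv_tendsto {φ : ℝ → ℝ} (hmono : Monotone φ)
    (hφtop : Filter.Tendsto φ Filter.atTop Filter.atTop) {u : ℝ} (v : ℕ → ℝ)
    (hv : Monotone v) (hvu : ∀ k, v k ≤ u)
    (hlim : Filter.Tendsto v Filter.atTop (nhds u)) :
    Filter.Tendsto (fun k => geninv φ (v k)) Filter.atTop (nhds (geninv φ u)) := by
  have hms : Monotone fun k => geninv φ (v k) :=
    fun i j h => geninv_mono hmono hφtop (hv h)
  have hub : ∀ k, geninv φ (v k) ≤ geninv φ u := fun k => geninv_mono hmono hφtop (hvu k)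
  have hbdd : BddAbove (Set.range fun k => geninv φ (v k)) :=
    ⟨geninv φ u, by rintro y ⟨k, rfl⟩; exact hub k⟩
  have htend := tendsto_atTop_ciSup hms hbdd
  have hLle : (⨆ k, geninv φ (v k)) ≤ geninv φ u := ciSup_le hub
  have hgeL : geninv φ u ≤ ⨆ k, geninv φ (v k) := by
    by_contra hcon
    push_neg at hcon
    set L := ⨆ k, geninv φ (v k) with hL
    set y := (L + geninv φ u) / 2 with hy
    have hLy : L < y := by simp only [hy]; linarith
    have hyg : y < geninv φ u := by simp only [hy]; linarith
    have h1 : ∀ k, geninv φ (v k) < y := fun k => lt_of_le_of_lt (le_ciSup hbdd k) hLy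
    have h2 : ∀ k, v k ≤ φ y := fun k => le_apply_of_geninv_lt hmono hφtop (h1 k)
    have h3 : u ≤ φ y := le_of_tendsto hlim (Filter.Eventually.of_forall h2)
    have h4 : 0 ≤ y := le_trans (geninv_nonneg φ (v 0)) (h1 0).le
    exact absurd (geninv_le h4 h3) (not_le.mpr hyg)
  have heq : (⨆ k, geninv φ (v k)) = geninv φ u := le_antisymm hLle hgeL
  rwa [heq] at htend

theorem stmt16 {n : ℕ} (φ : ℝ → ℝ) (hmono : Monotone φ) (hnn : ∀ x, 0 ≤ φ x)
    (hφ0 : φ 0 = 0) (hφ0plus : Filter.Tendsto φ (nhdsWithin 0 (Ioi 0)) (nhds 0))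
    (hφtop : Filter.Tendsto φ Filter.atTop Filter.atTop)
    (w : (Fin n → ℝ) → ℝ) (hwmeas : Measurable w) (hwpos : ∀ x, 0 < w x)
    (hwloc : LocallyIntegrable w)
    (C : ℝ) (hC : 1 < C)
    (hAphi : ∀ (a : Fin n → ℝ) (c : ℝ), 0 < c → ∀ ε > (0:ℝ),
      ε * (∫ x in cube a c, w x) / c ^ n *
          φ ((1 / c ^ n) * ∫ x in cube a c, geninv φ (1 / (ε * w x))) ≤ C) :
    ∀ (a : Fin n → ℝ) (c : ℝ), 0 < c → ∀ lam > (0:ℝ),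
      (1 / c ^ n) * ∫ x in cube a c,
          geninv φ ((1 / C) * φ lam * ((∫ y in cube a c, w y) / c ^ n) * (1 / w x)) ≤
        C * lam := by
  intro a c hc lam hlam
  have hC0 : (0:ℝ) < C := lt_trans one_pos hC
  have hcn : (0:ℝ) < c ^ n := pow_pos hc n
  -- the cube and the weight integral
  have hQeq : cube a c = Set.pi Set.univ (fun i => Icc (a i) (a i + c)) := by
    ext x
    simp only [cube, Set.mem_setOf_eq, Set.mem_pi, Set.mem_univ, Set.mem_Icc, true_implies]
  have hQcomp : IsCompact (cube a c) := by
    rw [hQeq]; exact isCompact_univ_pi fun i => isCompact_Icc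
  have hWint : IntegrableOn w (cube a c) := hwloc.integrableOn_isCompact hQcomp
  have hvolpos : 0 < volume (cube a c) := by
    rw [hQeq, volume_pi_pi]
    simp only [Real.volume_Icc, add_sub_cancel_left]
    rw [pos_iff_ne_zero]
    exact Finset.prod_ne_zero_iff.mpr fun i _ => (ENNReal.ofReal_pos.mpr hc).ne'
  have hWpos : (0:ℝ) < ∫ y in cube a c, w y := by
    rw [setIntegral_pos_iff_support_of_nonneg_ae
      (Filter.Eventually.of_forall fun x => (hwpos x).le) hWint]
    have hsupp : Function.support w = Set.univ :=
      Set.eq_univ_of_forall fun x => (hwpos x).ne'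
    rw [hsupp, Set.univ_inter]
    exact hvolpos
  set W := ∫ y in cube a c, w y with hW
  clear_value W
  rcases eq_or_lt_of_le (hnn lam) with h0 | hpos
  · -- φ lam = 0
    have hzero : ∀ x : Fin n → ℝ,
        (1 / C) * φ lam * (W / c ^ n) * (1 / w x) = 0 := fun x => by
      rw [← h0]; ring
    have hg0 : geninv φ 0 = 0 :=
      le_antisymm (geninv_le le_rfl (by rw [hφ0])) (geninv_nonneg φ 0)
    simp only [hzero, hg0, integral_zero, mul_zero]
    positivity
  · -- φ lam > 0
    set s₀ : ℝ := 1 / C * φ lam * (W / c ^ n) with hs₀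
    clear_value s₀
    have hs₀pos : 0 < s₀ := by
      rw [hs₀]
      apply mul_pos (mul_pos (by positivity) hpos) (div_pos hWpos hcn)
    simp only [mul_one_div]
    -- now the goal integrand is geninv φ (s₀ / w x)
    by_cases hgint : IntegrableOn (fun x => geninv φ (s₀ / w x)) (cube a c)
    swap
    · rw [integral_undef hgint, mul_zero]
      positivity
    · set θ : ℕ → ℝ := fun k => 1 - (1/2 : ℝ) ^ (k + 1) with hθ
      have hθpos : ∀ k, 0 < θ k := fun k => by
        have : (1/2 : ℝ) ^ (k + 1) < 1 :=
          pow_lt_one₀ (by norm_num) (by norm_num) (Nat.succ_ne_zero k)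
        simp only [hθ]; linarith
      have hθlt1 : ∀ k, θ k < 1 := fun k => by
        have : (0:ℝ) < (1/2 : ℝ) ^ (k + 1) := by positivity
        simp only [hθ]; linarith
      have hθmono : Monotone θ := fun i j hij => by
        simp only [hθ]
        have : (1/2 : ℝ) ^ (j + 1) ≤ (1/2 : ℝ) ^ (i + 1) :=
          pow_le_pow_of_le_one (by norm_num) (by norm_num) (by omega)
        linarith
      have hθtend : Filter.Tendsto θ Filter.atTop (nhds 1) := by
        have h1 : Filter.Tendsto (fun k : ℕ => (1/2 : ℝ) ^ (k + 1)) Filter.atTop (nhds 0) := by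
          have := tendsto_pow_atTop_nhds_zero_of_lt_one (by norm_num : (0:ℝ) ≤ 1/2)
            (by norm_num : (1/2:ℝ) < 1)
          exact this.comp (Filter.tendsto_add_atTop_nat 1)
        have h2 := (tendsto_const_nhds : Filter.Tendsto (fun _ : ℕ => (1:ℝ)) Filter.atTop
          (nhds 1)).sub h1
        rw [sub_zero] at h2
        exact h2
      clear_value θ
      -- measurability
      have hgeninvmeas : Measurable (geninv φ) := (geninv_mono hmono hφtop).measurable
      have hgkmeas : ∀ k, Measurable fun x => geninv φ (θ k * s₀ / w x) := fun k =>
        hgeninvmeas.comp (measurable_const.div hwmeas)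
      -- pointwise bounds
      have hgkle : ∀ k x, geninv φ (θ k * s₀ / w x) ≤ geninv φ (s₀ / w x) := by
        intro k x
        apply geninv_mono hmono hφtop
        apply div_le_div_of_nonneg_right ?_ (hwpos x).le
        nlinarith [hθlt1 k, hs₀pos]
      have hgkint : ∀ k, IntegrableOn (fun x => geninv φ (θ k * s₀ / w x)) (cube a c) := by
        intro k
        refine MeasureTheory.Integrable.mono hgint ((hgkmeas k).aestronglyMeasurable) ?_
        refine Filter.Eventually.of_forall fun x => ?_
        rw [Real.norm_eq_abs, Real.norm_eq_abs, abs_of_nonneg (geninv_nonneg _ _),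
          abs_of_nonneg (geninv_nonneg _ _)]
        exact hgkle k x
      have hmonox : ∀ x, Monotone fun k => geninv φ (θ k * s₀ / w x) := by
        intro x i j hij
        apply geninv_mono hmono hφtop
        apply div_le_div_of_nonneg_right ?_ (hwpos x).le
        nlinarith [hθmono hij, hs₀pos]
      have htendx : ∀ x, Filter.Tendsto (fun k => geninv φ (θ k * s₀ / w x))
          Filter.atTop (nhds (geninv φ (s₀ / w x))) := by
        intro x
        refine geninv_tendsto hmono hφtop _ ?_ ?_ ?_
        · intro i j hij
          apply div_le_div_of_nonneg_right ?_ (hwpos x).le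
          nlinarith [hθmono hij, hs₀pos]
        · intro k
          apply div_le_div_of_nonneg_right ?_ (hwpos x).le
          nlinarith [hθlt1 k, hs₀pos]
        · have h3 := (hθtend.mul_const s₀).div_const (w x)
          rw [one_mul] at h3
          exact h3
      have hMCT : Filter.Tendsto (fun k => ∫ x in cube a c, geninv φ (θ k * s₀ / w x))
          Filter.atTop (nhds (∫ x in cube a c, geninv φ (s₀ / w x))) :=
        integral_tendsto_of_tendsto_of_monotone hgkint hgint
          (Filter.Eventually.of_forall fun x => hmonox x)
          (Filter.Eventually.of_forall fun x => htendx x)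
      -- bound each approximating integral
      have hbound : ∀ k, ∫ x in cube a c, geninv φ (θ k * s₀ / w x) ≤ lam * c ^ n := by
        intro k
        have hθs : 0 < θ k * s₀ := mul_pos (hθpos k) hs₀pos
        have hA := hAphi a c hc (θ k * s₀)⁻¹ (inv_pos.mpr hθs)
        have hintegrand : ∀ x : Fin n → ℝ,
            1 / ((θ k * s₀)⁻¹ * w x) = θ k * s₀ / w x := fun x => by
          rw [one_div, mul_inv, inv_inv, div_eq_mul_inv]
        simp only [hintegrand] at hA
        rw [← hW] at hA
        have hcoef : (θ k * s₀)⁻¹ * W / c ^ n = C / (θ k * φ lam) := by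
          have h1 : θ k ≠ 0 := (hθpos k).ne'
          have h2 : C ≠ 0 := hC0.ne'
          have h3 : φ lam ≠ 0 := hpos.ne'
          have h4 : W ≠ 0 := hWpos.ne'
          have h5 : c ^ n ≠ 0 := hcn.ne'
          rw [hs₀]
          field_simp
        rw [hcoef] at hA
        have hφFk : φ ((1 / c ^ n) * ∫ x in cube a c, geninv φ (θ k * s₀ / w x))
            ≤ θ k * φ lam := by
          rw [div_mul_eq_mul_div, div_le_iff₀ (mul_pos (hθpos k) hpos)] at hA
          exact le_of_mul_le_mul_left hA hC0
        have hFk : (1 / c ^ n) * ∫ x in cube a c, geninv φ (θ k * s₀ / w x) ≤ lam := by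
          by_contra hcon
          push_neg at hcon
          have h1 : φ lam ≤ φ ((1 / c ^ n) * ∫ x in cube a c, geninv φ (θ k * s₀ / w x)) :=
            hmono hcon.le
          have h2 := mul_lt_mul_of_pos_right (hθlt1 k) hpos
          linarith
        have h2 := mul_le_mul_of_nonneg_left hFk hcn.le
        rw [← mul_assoc, mul_one_div, div_self hcn.ne', one_mul] at h2
        linarith
      have hfin : ∫ x in cube a c, geninv φ (s₀ / w x) ≤ lam * c ^ n :=
        le_of_tendsto hMCT (Filter.Eventually.of_forall hbound)
      have h3 : 1 / c ^ n * (∫ x in cube a c, geninv φ (s₀ / w x)) ≤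
          1 / c ^ n * (lam * c ^ n) :=
        mul_le_mul_of_nonneg_left hfin (by positivity)
      have h4 : 1 / c ^ n * (lam * c ^ n) = lam := by field_simp
      have h5 := mul_lt_mul_of_pos_right hC hlam
      rw [h4] at h3
      linarith
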